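/- (Noncommutative Shapiro Lemma.) Let G be a subgroup of finite index of a group H. The map c : H¹(H, N_H) → H¹(G, N) induced on cohomology classes by sending a cocycle u ∈ Z¹(H, N_H) to the cocycle g ↦ u(g)(1_H) in Z¹(G,N) is a bijection. -/

import Mathlib

/-- A 1-cocycle of `G` in a (possibly noncommutative) group `N` on which `G`
acts on the left by group automorphisms: `u (g₁ * g₂) = u g₁ * g₁ • u g₂`. -/
def IsCocycle {G N : Type*} [Group G] [Group N] [MulDistribMulAction G N]
    (u : G → N) : Prop :=
  ∀ g₁ g₂ : G, u (g₁ * g₂) = u g₁ * g₁ • u g₂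

/-- Two maps `u v : G → N` are cohomologous if there is `n : N` with
`v g = n⁻¹ * u g * g • n` for all `g`. -/
def Cohomologous {G N : Type*} [Group G] [Group N] [MulDistribMulAction G N]
    (u v : G → N) : Prop :=
  ∃ n : N, ∀ g : G, v g = n⁻¹ * u g * g • n

/-- The induced `H`-group `N_H` of `G`-covariant maps `φ : H → N`
(those with `φ (g * h) = g • φ h`), as a subgroup of the group of all maps
`H → N` with pointwise multiplication. -/
def NHgroup {H : Type*} [Group H] (G : Subgroup H) (N : Type*) [Group N]
    [MulDistribMulAction G N] : Subgroup (H → N) where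
  carrier := {φ | ∀ (g : G) (h : H), φ ((g : H) * h) = g • φ h}
  mul_mem' := by
    intro a b ha hb g h
    simp only [Pi.mul_apply, ha g h, hb g h, smul_mul']
  one_mem' := by
    intro g h
    simp
  inv_mem' := by
    intro a ha g h
    simp only [Pi.inv_apply, ha g h, smul_inv']

/-- The left action of `H` on `N_H`, given by `(h • φ) h' = φ (h' * h)`; it is an
action by group automorphisms. -/
instance NHaction {H : Type*} [Group H] (G : Subgroup H) (N : Type*) [Group N]
    [MulDistribMulAction G N] : MulDistribMulAction H ↥(NHgroup G N) where
  smul h φ := ⟨fun h' => (φ : H → N) (h' * h), fun g h' => by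
    show (φ : H → N) ((g : H) * h' * h) = g • (φ : H → N) (h' * h)
    rw [mul_assoc]; exact φ.2 g (h' * h)⟩
  one_smul φ := by
    ext h'
    show (φ : H → N) (h' * 1) = (φ : H → N) h'
    rw [mul_one]
  mul_smul h₁ h₂ φ := by
    ext h'
    show (φ : H → N) (h' * (h₁ * h₂)) = (φ : H → N) (h' * h₁ * h₂)
    rw [mul_assoc]
  smul_mul h φ ψ := by
    ext h'
    rfl
  smul_one h := by
    ext h'
    rfl

/-- The setoid of 1-cocycles up to the cohomology relation. -/
def cocycleSetoid (G N : Type*) [Group G] [Group N] [MulDistribMulAction G N] :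
    Setoid {u : G → N // IsCocycle u} where
  r u v := Cohomologous u.1 v.1
  iseqv := by
    refine ⟨fun u => ⟨1, fun g => by simp⟩, ?_, ?_⟩
    · rintro u v ⟨n, hn⟩
      refine ⟨n⁻¹, fun g => ?_⟩
      rw [hn g, smul_inv']
      group
    · rintro u v w ⟨n, hn⟩ ⟨m, hm⟩
      refine ⟨n * m, fun g => ?_⟩
      rw [hm g, hn g, smul_mul', mul_inv_rev]
      group

/-- The first noncommutative cohomology set `H¹(G,N)`. -/
def H1 (G N : Type*) [Group G] [Group N] [MulDistribMulAction G N] :=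
  Quotient (cocycleSetoid G N)

/-!
A cocycle `u : H → N_H` is determined by the function `α x := u x 1`, via
`u h x = (α x)⁻¹ * α (x * h)`, and `G`-covariance of the values of `u` together with the cocycle
identity say exactly that `α (g * x) = v g * g • α x`, where `v` is the restriction `g ↦ u g 1`.
Conversely, every cocycle `v : G → N` admits such an `α`: choose a right transversal of `G`, so
that every `x : H` factors uniquely as `γ x * t` with `γ x ∈ G`, and put `α := v ∘ γ`. A
cohomology `v' g = n⁻¹ * v g * g • n` between restrictions lifts to the cohomology given by the
`G`-covariant map `x ↦ (α x)⁻¹ * n * α' x`.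
-/

namespace NHgroup

variable {H : Type*} [Group H] {G : Subgroup H} {N : Type*} [Group N] [MulDistribMulAction G N]

@[simp]
lemma smul_apply (h : H) (φ : NHgroup G N) (x : H) :
    ((h • φ : NHgroup G N) : H → N) x = (φ : H → N) (x * h) := rfl

lemma apply_coe (φ : NHgroup G N) (g : G) : (φ : H → N) g = g • (φ : H → N) 1 := by
  simpa using φ.2 g 1

end NHgroup

section Shapiro

variable {H : Type*} [Group H] {G : Subgroup H} {N : Type*} [Group N] [MulDistribMulAction G N]

def IsTwistedCovariant (v : G → N) (α : H → N) : Prop :=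
  ∀ (g : G) (x : H), α (g * x) = v g * g • α x

lemma IsCocycle.isTwistedCovariant_apply_one {u : H → NHgroup G N} (hu : IsCocycle u) :
    IsTwistedCovariant (fun g : G => (u g : H → N) 1) (fun x => (u x : H → N) 1) := by
  intro g x
  simpa [NHgroup.apply_coe (u x) g] using congrArg (fun φ : NHgroup G N => (φ : H → N) 1) (hu g x)

lemma IsCocycle.apply_eq {u : H → NHgroup G N} (hu : IsCocycle u) (h x : H) :
    (u h : H → N) x = ((u x : H → N) 1)⁻¹ * (u (x * h) : H → N) 1 := by
  have := congrArg (fun φ : NHgroup G N => (φ : H → N) 1) (hu x h)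
  simp only [Subgroup.coe_mul, Pi.mul_apply, NHgroup.smul_apply, one_mul] at this
  rw [this, inv_mul_cancel_left]

variable {v : G → N} {α : H → N}

def inducedCocycle (hα : IsTwistedCovariant v α) (h : H) : NHgroup G N :=
  ⟨fun x => (α x)⁻¹ * α (x * h), fun g x => by
    simp only [mul_assoc, hα g x, hα g (x * h), mul_inv_rev, smul_mul', smul_inv',
      inv_mul_cancel_left]⟩

@[simp]
lemma inducedCocycle_apply (hα : IsTwistedCovariant v α) (h x : H) :
    (inducedCocycle hα h : H → N) x = (α x)⁻¹ * α (x * h) := rfl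

lemma isCocycle_inducedCocycle (hα : IsTwistedCovariant v α) : IsCocycle (inducedCocycle hα) := by
  intro h₁ h₂
  ext x
  simp [mul_assoc]

lemma IsCocycle.inducedCocycle_eq {u : H → NHgroup G N} (hu : IsCocycle u) :
    inducedCocycle hu.isTwistedCovariant_apply_one = u := by
  funext h
  ext x
  exact (hu.apply_eq h x).symm

lemma cohomologous_inducedCocycle_apply_one (hα : IsTwistedCovariant v α) :
    Cohomologous (fun g : G => (inducedCocycle hα g : H → N) 1) v :=
  ⟨(α 1)⁻¹, fun g => by
    have hg := hα g 1
    rw [mul_one] at hg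
    simp only [inducedCocycle_apply, one_mul, hg, inv_inv, smul_inv', mul_inv_cancel_left,
      mul_inv_cancel_right]⟩

lemma cohomologous_inducedCocycle {v' : G → N} {α' : H → N} (hα : IsTwistedCovariant v α)
    (hα' : IsTwistedCovariant v' α') (hvv' : Cohomologous v v') :
    Cohomologous (inducedCocycle hα) (inducedCocycle hα') := by
  obtain ⟨n, hn⟩ := hvv'
  refine ⟨⟨fun x => (α x)⁻¹ * n * α' x, fun g x => ?_⟩, fun h => ?_⟩
  · simp only [hα g x, hα' g x, hn, mul_inv_rev, smul_mul', smul_inv']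
    group
  · ext x
    simp only [inducedCocycle_apply, Subgroup.coe_mul, Subgroup.coe_inv, Pi.mul_apply,
      Pi.inv_apply, NHgroup.smul_apply]
    group

lemma IsCocycle.exists_isTwistedCovariant (hv : IsCocycle v) :
    ∃ α : H → N, IsTwistedCovariant v α := by
  obtain ⟨T, hT, -⟩ := Subgroup.exists_isComplement_right G 1
  refine ⟨fun x => v (hT.equiv x).1, fun g x => ?_⟩
  simp only [hT.equiv_mul_left_of_mem g.2]
  exact hv _ _

end Shapiro

theorem noncommutative_shapiro_lemma {H : Type*} [Group H] (G : Subgroup H)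
    {N : Type*} [Group N] [MulDistribMulAction G N]
    (hind : ∀ u : H → ↥(NHgroup G N), IsCocycle u →
      IsCocycle (fun g : G => ((u (g : H) : H → N)) 1))
    (c : H1 H ↥(NHgroup G N) → H1 G N)
    (hc : ∀ u : {u : H → ↥(NHgroup G N) // IsCocycle u},
      c (Quotient.mk (cocycleSetoid H ↥(NHgroup G N)) u) =
        Quotient.mk (cocycleSetoid G N)
          ⟨fun g : G => ((u.1 (g : H) : H → N)) 1, hind u.1 u.2⟩) :
    Function.Bijective c := by
  constructor
  · intro a a' haa'
    induction a, a' using Quotient.inductionOn₂ with | h u u' =>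
    rw [hc, hc] at haa'
    have huu' := cohomologous_inducedCocycle u.2.isTwistedCovariant_apply_one
      u'.2.isTwistedCovariant_apply_one (Quotient.exact haa')
    rw [u.2.inducedCocycle_eq, u'.2.inducedCocycle_eq] at huu'
    exact Quotient.sound huu'
  · intro b
    induction b using Quotient.inductionOn with | h v =>
    obtain ⟨α, hα⟩ := v.2.exists_isTwistedCovariant (H := H)
    refine ⟨Quotient.mk _ ⟨inducedCocycle hα, isCocycle_inducedCocycle hα⟩, ?_⟩
    rw [hc]
    exact Quotient.sound (cohomologous_inducedCocycle_apply_one hα)
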